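/- arXiv:2105.07734 — 4 statements merged into one kernel-verified Lean document; each statement's English description precedes it below -/
import Mathlib

section
/- Define the structure 𝓜 whose domain is the set of pairs (b,n) ∈ {0,1} × ℤ such that b = 0 implies n ≥ 0, with constant 0^𝓜 = (0,0), successor s(b,n) = (b, n+1), predecessor p(0,n) = (0, max(n-1, 0)) and p(1,n) = (1, n-1), and addition (b₁,n₁)+(b₂,n₂) = (max(b₁,b₂), n₁+n₂). Then 𝓜 satisfies the axioms (A1) 0 ≠ s(x), (A2) p(0)=0, (A3) p(s(x))=x, (A4) x+0=x, (A5) x+s(y)=s(x+y), and (B1) x ≠ 0 → x = s(p(x)). -/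
/-- The domain of the structure 𝓜: pairs (b, n) with b ∈ {0,1} (as Bool,
`false` playing the role of 0) and n ∈ ℤ, where b = 0 forces n ≥ 0. -/
def MDom : Type := {q : Bool × ℤ // q.1 = false → 0 ≤ q.2}

def MZero : MDom := ⟨(false, 0), fun _ => le_refl 0⟩

def MSucc (x : MDom) : MDom :=
  ⟨(x.val.1, x.val.2 + 1), fun h => le_trans (x.property h) (by omega)⟩

def MPred (x : MDom) : MDom :=
  if h : x.val.1 = false then
    ⟨(false, max (x.val.2 - 1) 0), fun _ => le_max_right _ _⟩
  else
    ⟨(true, x.val.2 - 1), fun h' => by simp at h'⟩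

def MAdd (x y : MDom) : MDom :=
  ⟨(max x.val.1 y.val.1, x.val.2 + y.val.2), fun h => by
    rcases max_eq_bot.mp h with ⟨h1, h2⟩
    exact add_nonneg (x.property h1) (y.property h2)⟩

namespace MDom

theorem ext {x y : MDom} (h : x.val = y.val) : x = y :=
  Subtype.ext h

@[simp] theorem val_zero : MZero.val = (false, 0) := rfl

@[simp] theorem val_succ (x : MDom) : (MSucc x).val = (x.val.1, x.val.2 + 1) := rfl

@[simp] theorem val_add (x y : MDom) :
    (MAdd x y).val = (max x.val.1 y.val.1, x.val.2 + y.val.2) := rfl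

@[simp] theorem val_pred_of_false {x : MDom} (h : x.val.1 = false) :
    (MPred x).val = (false, max (x.val.2 - 1) 0) := by
  simp [MPred, h]

@[simp] theorem val_pred_of_true {x : MDom} (h : x.val.1 = true) :
    (MPred x).val = (true, x.val.2 - 1) := by
  simp [MPred, h]

theorem zero_ne_succ (x : MDom) : MZero ≠ MSucc x := by
  intro h
  have hval := congrArg Subtype.val h
  simp only [val_zero, val_succ, Prod.mk.injEq] at hval
  have hn : 0 ≤ x.val.2 := x.property hval.1.symm
  omega

theorem pred_zero : MPred MZero = MZero :=
  ext (val_pred_of_false rfl)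

theorem pred_succ (x : MDom) : MPred (MSucc x) = x := by
  apply ext
  cases hb : x.val.1 with
  | false =>
    -- the domain invariant `0 ≤ n` makes the truncation `max (n - 1) 0` in `MPred` harmless
    have hn : 0 ≤ x.val.2 := x.property hb
    ext <;> simp [hb]
    omega
  | true =>
    ext <;> simp [hb]

theorem add_zero (x : MDom) : MAdd x MZero = x :=
  ext (by simp)

theorem add_succ (x y : MDom) : MAdd x (MSucc y) = MSucc (MAdd x y) :=
  ext (by simp [add_assoc])

theorem succ_pred {x : MDom} (hx : x ≠ MZero) : x = MSucc (MPred x) := by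
  apply ext
  cases hb : x.val.1 with
  | false =>
    have hn : x.val.2 ≠ 0 := fun h => hx (ext (Prod.ext hb h))
    have hn_nonneg : 0 ≤ x.val.2 := x.property hb
    ext <;> simp [hb]
    omega
  | true =>
    ext <;> simp [hb]

end MDom

theorem stmt_7 :
    (∀ x : MDom, MZero ≠ MSucc x) ∧
    (MPred MZero = MZero) ∧
    (∀ x : MDom, MPred (MSucc x) = x) ∧
    (∀ x : MDom, MAdd x MZero = x) ∧
    (∀ x y : MDom, MAdd x (MSucc y) = MSucc (MAdd x y)) ∧
    (∀ x : MDom, x ≠ MZero → x = MSucc (MPred x)) :=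
  ⟨MDom.zero_ne_succ, MDom.pred_zero, MDom.pred_succ, MDom.add_zero, MDom.add_succ,
    fun _ => MDom.succ_pred⟩
end

section
/- Let terms in one variable x over the signature {0, s, p, +} be defined inductively. For every such term t there exist a natural number N and a p-free term t' (a term over {0, s, +} only) such that in every structure M satisfying the axioms (A1)–(A5), and for every a ∈ M, the evaluation of t at s^N(a) equals the evaluation of t' at a. -/
/-- Terms in one variable x over the signature {0, s, p, +}. -/
inductive TrmP : Type
  | var : TrmP
  | zero : TrmP
  | succ : TrmP → TrmP
  | pred : TrmP → TrmP
  | add : TrmP → TrmP → TrmP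

/-- A term is p-free if the constructor `pred` does not occur in it. -/
def pFree : TrmP → Prop
  | TrmP.var => True
  | TrmP.zero => True
  | TrmP.succ t => pFree t
  | TrmP.pred _ => False
  | TrmP.add t₁ t₂ => pFree t₁ ∧ pFree t₂

/-- Evaluation of a term in a structure (z, s, p, add) at a point. -/
def evalT {M : Type} (z : M) (s p : M → M) (add : M → M → M) : TrmP → M → M
  | TrmP.var, a => a
  | TrmP.zero, _ => z
  | TrmP.succ t, a => s (evalT z s p add t a)
  | TrmP.pred t, a => p (evalT z s p add t a)
  | TrmP.add t₁ t₂, a => add (evalT z s p add t₁ a) (evalT z s p add t₂ a)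

/-- Substitute `succ var` for `var`. -/
def substS : TrmP → TrmP
  | TrmP.var => TrmP.succ TrmP.var
  | TrmP.zero => TrmP.zero
  | TrmP.succ t => TrmP.succ (substS t)
  | TrmP.pred t => TrmP.pred (substS t)
  | TrmP.add t₁ t₂ => TrmP.add (substS t₁) (substS t₂)

lemma pFree_substS : ∀ t, pFree t → pFree (substS t)
  | TrmP.var, _ => trivial
  | TrmP.zero, _ => trivial
  | TrmP.succ t, h => pFree_substS t h
  | TrmP.pred _, h => h.elim
  | TrmP.add t₁ t₂, h => ⟨pFree_substS t₁ h.1, pFree_substS t₂ h.2⟩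

lemma pFree_substS_iter (n : ℕ) (t : TrmP) (h : pFree t) : pFree (substS^[n] t) := by
  induction n generalizing t with
  | zero => exact h
  | succ n ih =>
    rw [Function.iterate_succ_apply]
    exact ih _ (pFree_substS t h)

lemma eval_substS {M : Type} (z : M) (s p : M → M) (add : M → M → M) :
    ∀ t a, evalT z s p add (substS t) a = evalT z s p add t (s a)
  | TrmP.var, a => rfl
  | TrmP.zero, a => rfl
  | TrmP.succ t, a => by simp [substS, evalT, eval_substS z s p add t a]
  | TrmP.pred t, a => by simp [substS, evalT, eval_substS z s p add t a]
  | TrmP.add t₁ t₂, a => by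
      simp [substS, evalT, eval_substS z s p add t₁ a, eval_substS z s p add t₂ a]

lemma eval_substS_iter {M : Type} (z : M) (s p : M → M) (add : M → M → M)
    (n : ℕ) (t : TrmP) (a : M) :
    evalT z s p add (substS^[n] t) a = evalT z s p add t (s^[n] a) := by
  induction n generalizing t with
  | zero => rfl
  | succ n ih =>
    rw [Function.iterate_succ_apply, ih, eval_substS, ← Function.iterate_succ_apply' s]

/-- The axioms A2–A5 (A1 is not needed). -/
def Ax {M : Type} (z : M) (s p : M → M) (add : M → M → M) : Prop :=
  (p z = z) ∧ (∀ x, p (s x) = x) ∧ (∀ x, add x z = x) ∧ (∀ x y, add x (s y) = s (add x y))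

/-- Headroom lemma: a p-free term, given enough `s`-headroom on its input,
evaluates either to `z` (uniformly) or to an `s`-image of a p-free term. -/
lemma headroom : ∀ t' : TrmP, pFree t' → ∃ (n : ℕ) (t'' : TrmP), pFree t'' ∧
    ((∀ (M : Type) (z : M) (s p : M → M) (add : M → M → M), Ax z s p add →
        ∀ a, evalT z s p add t' (s^[n] a) = z) ∨
     (∀ (M : Type) (z : M) (s p : M → M) (add : M → M → M), Ax z s p add →
        ∀ a, evalT z s p add t' (s^[n] a) = s (evalT z s p add t'' a))) := by
  intro t'
  induction t' with
  | var =>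
    intro _
    refine ⟨1, TrmP.var, trivial, Or.inr ?_⟩
    intro M z s p add _ a
    rfl
  | zero =>
    intro _
    exact ⟨0, TrmP.zero, trivial, Or.inl fun M z s p add _ a => rfl⟩
  | succ u ihu =>
    intro hp
    exact ⟨0, u, hp, Or.inr fun M z s p add _ a => rfl⟩
  | pred u ihu => intro hp; exact hp.elim
  | add u v ihu ihv =>
    intro hp
    obtain ⟨hu, hv⟩ := hp
    obtain ⟨nv, v'', hv'', hcv⟩ := ihv hv
    rcases hcv with hvz | hvs
    · -- v is constantly z at headroom nv
      obtain ⟨nu, u'', hu'', hcu⟩ := ihu hu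
      rcases hcu with huz | hus
      · refine ⟨nu + nv, TrmP.zero, trivial, Or.inl ?_⟩
        intro M z s p add hax a
        show add (evalT z s p add u (s^[nu + nv] a)) (evalT z s p add v (s^[nu + nv] a)) = z
        rw [Function.iterate_add_apply s nu nv a, huz M z s p add hax,
          ← Function.iterate_add_apply s nu nv a, Nat.add_comm nu nv,
          Function.iterate_add_apply s nv nu a, hvz M z s p add hax, hax.2.2.1]
      · refine ⟨nu + nv, substS^[nv] u'', pFree_substS_iter nv u'' hu'', Or.inr ?_⟩
        intro M z s p add hax a
        show add (evalT z s p add u (s^[nu + nv] a)) (evalT z s p add v (s^[nu + nv] a))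
          = s (evalT z s p add (substS^[nv] u'') a)
        rw [Function.iterate_add_apply s nu nv a, hus M z s p add hax,
          ← Function.iterate_add_apply s nu nv a, Nat.add_comm nu nv,
          Function.iterate_add_apply s nv nu a, hvz M z s p add hax, hax.2.2.1,
          eval_substS_iter]
    · -- v is an s-image at headroom nv
      refine ⟨nv, TrmP.add (substS^[nv] u) v'',
        ⟨pFree_substS_iter nv u hu, hv''⟩, Or.inr ?_⟩
      intro M z s p add hax a
      have a5 := hax.2.2.2
      show add (evalT z s p add u (s^[nv] a)) (evalT z s p add v (s^[nv] a))
        = s (evalT z s p add (TrmP.add (substS^[nv] u) v'') a)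
      rw [hvs M z s p add hax, a5]
      show s (add (evalT z s p add u (s^[nv] a)) (evalT z s p add v'' a))
        = s (add (evalT z s p add (substS^[nv] u) a) (evalT z s p add v'' a))
      rw [eval_substS_iter]

theorem stmt_11 :
    ∀ t : TrmP, ∃ (N : ℕ) (t' : TrmP), pFree t' ∧
      ∀ (M : Type) (z : M) (s p : M → M) (add : M → M → M),
        (∀ x, z ≠ s x) → (p z = z) → (∀ x, p (s x) = x) →
        (∀ x, add x z = x) → (∀ x y, add x (s y) = s (add x y)) →
        ∀ a : M, evalT z s p add t (s^[N] a) = evalT z s p add t' a := by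
  intro t
  induction t with
  | var => exact ⟨0, TrmP.var, trivial, fun M z s p add _ _ _ _ _ a => rfl⟩
  | zero => exact ⟨0, TrmP.zero, trivial, fun M z s p add _ _ _ _ _ a => rfl⟩
  | succ u ihu =>
    obtain ⟨N, u', hu', hu⟩ := ihu
    refine ⟨N, TrmP.succ u', hu', ?_⟩
    intro M z s p add a1 a2 a3 a4 a5 a
    show s (evalT z s p add u (s^[N] a)) = s (evalT z s p add u' a)
    rw [hu M z s p add a1 a2 a3 a4 a5 a]
  | pred u ihu =>
    obtain ⟨N, u', hu', hu⟩ := ihu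
    obtain ⟨n, u'', hu'', hc⟩ := headroom u' hu'
    rcases hc with hz | hs
    · refine ⟨N + n, TrmP.zero, trivial, ?_⟩
      intro M z s p add a1 a2 a3 a4 a5 a
      show p (evalT z s p add u (s^[N + n] a)) = z
      rw [Function.iterate_add_apply s N n a, hu M z s p add a1 a2 a3 a4 a5,
        hz M z s p add ⟨a2, a3, a4, a5⟩, a2]
    · refine ⟨N + n, u'', hu'', ?_⟩
      intro M z s p add a1 a2 a3 a4 a5 a
      show p (evalT z s p add u (s^[N + n] a)) = evalT z s p add u'' a
      rw [Function.iterate_add_apply s N n a, hu M z s p add a1 a2 a3 a4 a5,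
        hs M z s p add ⟨a2, a3, a4, a5⟩, a3]
  | add u v ihu ihv =>
    obtain ⟨Nu, u', hu', hu⟩ := ihu
    obtain ⟨Nv, v', hv', hv⟩ := ihv
    refine ⟨Nu + Nv, TrmP.add (substS^[Nv] u') (substS^[Nu] v'),
      ⟨pFree_substS_iter Nv u' hu', pFree_substS_iter Nu v' hv'⟩, ?_⟩
    intro M z s p add a1 a2 a3 a4 a5 a
    show add (evalT z s p add u (s^[Nu + Nv] a)) (evalT z s p add v (s^[Nu + Nv] a))
      = add (evalT z s p add (substS^[Nv] u') a) (evalT z s p add (substS^[Nu] v') a)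
    rw [Function.iterate_add_apply s Nu Nv a, hu M z s p add a1 a2 a3 a4 a5,
      ← Function.iterate_add_apply s Nu Nv a, Nat.add_comm Nu Nv,
      Function.iterate_add_apply s Nv Nu a,
      hv M z s p add a1 a2 a3 a4 a5, eval_substS_iter, eval_substS_iter]
end

section
/- Let 𝓜 be the structure with domain {(b,n) ∈ {0,1}×ℤ | b=0 → n≥0}, zero (0,0), and successor s(b,n)=(b,n+1). Let P be a predicate on 𝓜 such that: (i) P((0,0)) holds; (ii) for all x in 𝓜, P(x) implies P(s(x)); and (iii) there exists N ∈ ℕ such that for all n ≥ N, P((1,-n)) holds if and only if P((0,n)) holds. Then P holds for every element of 𝓜. -/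
lemma steps_aux (P : MDom → Prop) (hstep : ∀ x, P x → P (MSucc x)) :
    ∀ (j : ℕ) (b : Bool) (n : ℤ) (h : b = false → 0 ≤ n),
      P ⟨(b, n), h⟩ → P ⟨(b, n + j), fun hb => by have := h hb; omega⟩ := by
  intro j
  induction j with
  | zero => intro b n h hp; simpa using hp
  | succ j ih =>
      intro b n h hp
      have hthis := hstep _ (ih b n h hp)
      simp only [MSucc] at hthis
      convert hthis using 2
      push_cast
      ring

theorem stmt_13 (P : MDom → Prop)
    (h0 : P MZero)
    (hstep : ∀ x, P x → P (MSucc x))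
    (hrad : ∃ N : ℕ, ∀ n : ℕ, N ≤ n →
      (P ⟨(true, -(n : ℤ)), fun h => by simp at h⟩ ↔
       P ⟨(false, (n : ℤ)), fun _ => Int.natCast_nonneg n⟩)) :
    ∀ x, P x := by
  obtain ⟨N, hN⟩ := hrad
  have hfalse : ∀ n : ℕ, P ⟨(false, (n : ℤ)), fun _ => Int.natCast_nonneg n⟩ := by
    intro n
    have := steps_aux P hstep n false 0 (fun _ => le_refl 0) h0
    convert this using 2
    push_cast
    ring
  rintro ⟨⟨b, m⟩, hb⟩
  cases b with
  | false =>
      obtain ⟨n, rfl⟩ := Int.eq_ofNat_of_zero_le (hb rfl)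
      exact hfalse n
  | true =>
      -- choose n ≥ N with -n ≤ m
      obtain ⟨n, hnN, hnm⟩ : ∃ n : ℕ, N ≤ n ∧ -(n : ℤ) ≤ m := by
        refine ⟨N + m.natAbs, by omega, ?_⟩
        omega
      have hPn : P ⟨(true, -(n : ℤ)), fun h => by simp at h⟩ :=
        (hN n hnN).mpr (hfalse n)
      obtain ⟨j, hj⟩ : ∃ j : ℕ, m = -(n : ℤ) + j := by
        refine ⟨(m + n).toNat, ?_⟩
        omega
      subst hj
      exact steps_aux P hstep j true (-(n:ℤ)) (fun h => by simp at h) hPn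
end

section
/- Let M be a structure with 0, successor s, predecessor p, and addition + satisfying the axioms (A1)–(A5), and suppose M satisfies the induction principle for all predicates. Then for all natural numbers m, n with 0 < n < m, and for all x, y ∈ M: s^n(m•x) ≠ m•y, where s^n denotes n-fold application of s and m•x denotes the m-fold sum of x. -/
/-- `nfold add k x` is the (k+1)-fold sum x + (x + ⋯ + x); so the m-fold
sum m•x (for m ≥ 1) is `nfold add (m-1) x`. -/
def nfold {M : Type*} (add : M → M → M) : ℕ → M → M
  | 0, x => x
  | k + 1, x => add x (nfold add k x)

theorem stmt_15 {M : Type*} (z : M) (s p : M → M) (add : M → M → M)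
    (hA1 : ∀ x, z ≠ s x) (hA2 : p z = z) (hA3 : ∀ x, p (s x) = x)
    (hA4 : ∀ x, add x z = x) (hA5 : ∀ x y, add x (s y) = s (add x y))
    (hind : ∀ P : M → Prop, P z → (∀ x, P x → P (s x)) → ∀ x, P x) :
    ∀ m n : ℕ, 0 < n → n < m → ∀ x y : M,
      s^[n] (nfold add (m - 1) x) ≠ nfold add (m - 1) y := by
  -- s is injective
  have hsinj : Function.Injective s := fun a b h => by
    have := congrArg p h; rwa [hA3, hA3] at this
  -- every element is s^[k] z
  have hrep : ∀ x : M, ∃ k : ℕ, x = s^[k] z := by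
    apply hind (fun x => ∃ k : ℕ, x = s^[k] z) ⟨0, rfl⟩
    rintro x ⟨k, rfl⟩
    exact ⟨k + 1, (Function.iterate_succ_apply' s k z).symm⟩
  -- iterates of s at z are distinct
  have hiter : ∀ a b : ℕ, s^[a] z = s^[b] z → a = b := by
    intro a
    induction a with
    | zero =>
      intro b h
      cases b with
      | zero => rfl
      | succ b =>
        rw [Function.iterate_succ_apply'] at h
        exact absurd h (hA1 _)
    | succ a ih =>
      intro b h
      cases b with
      | zero =>
        rw [Function.iterate_succ_apply'] at h
        exact absurd h.symm (hA1 _)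
      | succ b =>
        rw [Function.iterate_succ_apply', Function.iterate_succ_apply'] at h
        exact congrArg Nat.succ (ih b (hsinj h))
  -- add x (s^[b] z) = s^[b] x
  have hadd : ∀ (b : ℕ) (x : M), add x (s^[b] z) = s^[b] x := by
    intro b
    induction b with
    | zero => intro x; exact hA4 x
    | succ b ih =>
      intro x
      rw [Function.iterate_succ_apply', hA5, ih]; exact (Function.iterate_succ_apply' s b x).symm
  -- nfold add k (s^[a] z) = s^[(k+1)*a] z
  have hnf : ∀ (k a : ℕ), nfold add k (s^[a] z) = s^[(k + 1) * a] z := by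
    intro k a
    induction k with
    | zero => simp [nfold]
    | succ k ih =>
      show add (s^[a] z) (nfold add k (s^[a] z)) = _
      rw [ih, hadd, ← Function.iterate_add_apply]
      congr 1
      ring
  intro m n hn hm x y h
  obtain ⟨a, rfl⟩ := hrep x
  obtain ⟨b, rfl⟩ := hrep y
  rw [hnf, hnf, ← Function.iterate_add_apply] at h
  have key : n + (m - 1 + 1) * a = (m - 1 + 1) * b := hiter _ _ h
  have hm1 : m - 1 + 1 = m := by omega
  rw [hm1] at key
  have hab : a < b := by nlinarith
  have : m * (a + 1) ≤ m * b := Nat.mul_le_mul_left m hab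
  have hma : m * (a + 1) = m * a + m := by ring
  omega
end
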